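/- arXiv:1403.3803 — 6 statements merged into one kernel-verified Lean document; each statement's English description precedes it below -/
import Mathlib

section
/- Let N ≥ 3, β ≤ 1 and γ ≤ 2 with γ < N. Define q_*(α,β,γ) = 2(α − γβ + N)/(N−γ), q_**(α,β,γ) = 2(2α + (1−2β)γ + 2(N−1))/(2(N−1) − γ), α₁ = −(1−β)γ, α₂ = −(1−β)N, α₃ = −(N + (1−2β)γ)/2. Then for every α ∈ ℝ: max{1, 2β, q_*, q_**} = q_** if α ≥ α₁; = q_* if max{α₂, α₃} ≤ α ≤ α₁; and = max{1, 2β} if α ≤ max{α₂, α₃}. -/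
/-!
With `A = N - γ` and `B = 2(N - 1) - γ`, both exponents are affine in `α` and equal `2` at `α₁`:
`q_* = 2 + (2 / A)(α - α₁)` and `q_** = 2 + (4 / B)(α - α₁)`, where `2 / A ≤ 4 / B` because
`4A - 2B = 2(2 - γ) ≥ 0`. So `q_**` dominates `q_*` exactly for `α ≥ α₁`, and both are at least
`2 ≥ max{1, 2β}` there. Below `α₁` the larger one is `q_*`, and rewriting it as
`1 + (2 / A)(α - α₃) = 2β + (2 / A)(α - α₂)` compares it with `1` and `2β`.
-/

noncomputable section

namespace CriticalExponent

def qStar (N β γ α : ℝ) : ℝ := 2 * (α - γ * β + N) / (N - γ)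

def qStarStar (N β γ α : ℝ) : ℝ :=
  2 * (2 * α + (1 - 2 * β) * γ + 2 * (N - 1)) / (2 * (N - 1) - γ)

def alpha₁ (β γ : ℝ) : ℝ := -(1 - β) * γ

def alpha₂ (N β : ℝ) : ℝ := -(1 - β) * N

def alpha₃ (N β γ : ℝ) : ℝ := -(N + (1 - 2 * β) * γ) / 2

def qMax (N β γ α : ℝ) : ℝ := max (max 1 (2 * β)) (max (qStar N β γ α) (qStarStar N β γ α))

variable {N β γ α : ℝ}

lemma qStar_eq_two_add (hA : N - γ ≠ 0) :
    qStar N β γ α = 2 + 2 / (N - γ) * (α - alpha₁ β γ) := by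
  unfold qStar alpha₁; field_simp; ring

lemma qStar_eq_one_add (hA : N - γ ≠ 0) :
    qStar N β γ α = 1 + 2 / (N - γ) * (α - alpha₃ N β γ) := by
  unfold qStar alpha₃; field_simp; ring

lemma qStar_eq_two_mul_add (hA : N - γ ≠ 0) :
    qStar N β γ α = 2 * β + 2 / (N - γ) * (α - alpha₂ N β) := by
  unfold qStar alpha₂; field_simp; ring

lemma qStarStar_eq_two_add (hB : 2 * (N - 1) - γ ≠ 0) :
    qStarStar N β γ α = 2 + 4 / (2 * (N - 1) - γ) * (α - alpha₁ β γ) := by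
  unfold qStarStar alpha₁; field_simp; ring

lemma two_div_le_four_div (hγ : γ ≤ 2) (hA : 0 < N - γ) (hB : 0 < 2 * (N - 1) - γ) :
    2 / (N - γ) ≤ 4 / (2 * (N - 1) - γ) := by
  rw [div_le_div_iff₀ hA hB]; linarith

lemma qStar_le_qStarStar (hγ : γ ≤ 2) (hA : 0 < N - γ) (hB : 0 < 2 * (N - 1) - γ)
    (hα : alpha₁ β γ ≤ α) : qStar N β γ α ≤ qStarStar N β γ α := by
  rw [qStar_eq_two_add hA.ne', qStarStar_eq_two_add hB.ne', add_le_add_iff_left]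
  exact mul_le_mul_of_nonneg_right (two_div_le_four_div hγ hA hB) (sub_nonneg.2 hα)

lemma qStarStar_le_qStar (hγ : γ ≤ 2) (hA : 0 < N - γ) (hB : 0 < 2 * (N - 1) - γ)
    (hα : α ≤ alpha₁ β γ) : qStarStar N β γ α ≤ qStar N β γ α := by
  rw [qStar_eq_two_add hA.ne', qStarStar_eq_two_add hB.ne', add_le_add_iff_left]
  exact mul_le_mul_of_nonpos_right (two_div_le_four_div hγ hA hB) (sub_nonpos.2 hα)

lemma alpha₂_le_alpha₁ (hβ : β ≤ 1) (hγN : γ ≤ N) : alpha₂ N β ≤ alpha₁ β γ := by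
  unfold alpha₁ alpha₂; nlinarith

lemma alpha₃_le_alpha₁ (hγN : γ ≤ N) : alpha₃ N β γ ≤ alpha₁ β γ := by
  unfold alpha₁ alpha₃; linarith

lemma qMax_eq_qStarStar (hβ : β ≤ 1) (hγ : γ ≤ 2) (hA : 0 < N - γ)
    (hB : 0 < 2 * (N - 1) - γ) (hα : alpha₁ β γ ≤ α) :
    qMax N β γ α = qStarStar N β γ α := by
  have two_le : 2 ≤ qStarStar N β γ α := by
    rw [qStarStar_eq_two_add hB.ne', le_add_iff_nonneg_right]
    exact mul_nonneg (by positivity) (sub_nonneg.2 hα)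
  have max_le_two : max 1 (2 * β) ≤ 2 := max_le (by norm_num) (by linarith)
  rw [qMax, max_eq_right (qStar_le_qStarStar hγ hA hB hα),
    max_eq_right (max_le_two.trans two_le)]

lemma qMax_eq_qStar (hγ : γ ≤ 2) (hA : 0 < N - γ) (hB : 0 < 2 * (N - 1) - γ)
    (hα : max (alpha₂ N β) (alpha₃ N β γ) ≤ α) (hα₁ : α ≤ alpha₁ β γ) :
    qMax N β γ α = qStar N β γ α := by
  obtain ⟨hα₂, hα₃⟩ := max_le_iff.1 hα
  have one_le : 1 ≤ qStar N β γ α := by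
    rw [qStar_eq_one_add hA.ne', le_add_iff_nonneg_right]
    exact mul_nonneg (by positivity) (sub_nonneg.2 hα₃)
  have two_mul_le : 2 * β ≤ qStar N β γ α := by
    rw [qStar_eq_two_mul_add hA.ne', le_add_iff_nonneg_right]
    exact mul_nonneg (by positivity) (sub_nonneg.2 hα₂)
  rw [qMax, max_eq_left (qStarStar_le_qStar hγ hA hB hα₁),
    max_eq_right (max_le one_le two_mul_le)]

lemma qMax_eq_max_one_two_mul (hβ : β ≤ 1) (hγ : γ ≤ 2) (hA : 0 < N - γ)
    (hB : 0 < 2 * (N - 1) - γ) (hα : α ≤ max (alpha₂ N β) (alpha₃ N β γ)) :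
    qMax N β γ α = max 1 (2 * β) := by
  have hγN : γ ≤ N := (sub_pos.1 hA).le
  have hα₁ : α ≤ alpha₁ β γ :=
    hα.trans (max_le (alpha₂_le_alpha₁ hβ hγN) (alpha₃_le_alpha₁ hγN))
  have qStar_le : qStar N β γ α ≤ max 1 (2 * β) := by
    rcases le_max_iff.1 hα with hα₂ | hα₃
    · refine le_max_of_le_right ?_
      rw [qStar_eq_two_mul_add hA.ne', add_le_iff_nonpos_right]
      exact mul_nonpos_of_nonneg_of_nonpos (by positivity) (sub_nonpos.2 hα₂)
    · refine le_max_of_le_left ?_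
      rw [qStar_eq_one_add hA.ne', add_le_iff_nonpos_right]
      exact mul_nonpos_of_nonneg_of_nonpos (by positivity) (sub_nonpos.2 hα₃)
  rw [qMax, max_eq_left (max_le qStar_le ((qStarStar_le_qStar hγ hA hB hα₁).trans qStar_le))]

end CriticalExponent

end

open CriticalExponent in
theorem stmt_3 (N β γ : ℝ) (hN : 3 ≤ N) (hβ : β ≤ 1) (hγ : γ ≤ 2) (α : ℝ) :
    (α ≥ -(1 - β) * γ →
      max (max 1 (2 * β))
          (max (2 * (α - γ * β + N) / (N - γ))
               (2 * (2 * α + (1 - 2 * β) * γ + 2 * (N - 1)) / (2 * (N - 1) - γ))) =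
        2 * (2 * α + (1 - 2 * β) * γ + 2 * (N - 1)) / (2 * (N - 1) - γ)) ∧
    (max (-(1 - β) * N) (-(N + (1 - 2 * β) * γ) / 2) ≤ α ∧ α ≤ -(1 - β) * γ →
      max (max 1 (2 * β))
          (max (2 * (α - γ * β + N) / (N - γ))
               (2 * (2 * α + (1 - 2 * β) * γ + 2 * (N - 1)) / (2 * (N - 1) - γ))) =
        2 * (α - γ * β + N) / (N - γ)) ∧
    (α ≤ max (-(1 - β) * N) (-(N + (1 - 2 * β) * γ) / 2) →
      max (max 1 (2 * β))
          (max (2 * (α - γ * β + N) / (N - γ))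
               (2 * (2 * α + (1 - 2 * β) * γ + 2 * (N - 1)) / (2 * (N - 1) - γ))) =
        max 1 (2 * β)) := by
  have hA : 0 < N - γ := by linarith
  have hB : 0 < 2 * (N - 1) - γ := by linarith
  exact ⟨qMax_eq_qStarStar hβ hγ hA hB,
    fun h => qMax_eq_qStar hγ hA hB h.1 h.2,
    qMax_eq_max_one_two_mul hβ hγ hA hB⟩
end

section
/- Let N ≥ 3 and γ = 2N−2 ≥ 2, β₀ ∈ [0,1], α₀ ∈ ℝ, q₁ ∈ ℝ. Suppose α₀ > −(1−β₀)γ and q₁ > max{1, 2β₀, −2(α₀ − 2(N−1)β₀ + N)/(N−2)}. Then there exists ξ ≥ 0 such that 1/2 ≤ β₀ + ξ ≤ 1, q₁ > 2(β₀ + ξ), and 2(α₀ + ξγ) + 2N − (γ+2)(β₀+ξ) > 0. -/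
/-!
Writing `t = 2 (β₀ + ξ)`, the last inequality becomes linear in `t` with slope `N - 2 > 0`,
namely `t > T := -2 (α₀ - 2 (N - 1) β₀ + N) / (N - 2)`. So one needs
`t ∈ [max 1 (2 β₀), 2] ∩ (T, q₁)`, and this set is nonempty because `q₁` exceeds both lower
bounds by hypothesis and `T < 2` is a rewriting of `α₀ > -(1 - β₀) γ`.
-/

theorem exists_mem_Icc_mem_Ioo {α : Type*} [LinearOrder α] [DenselyOrdered α] {a b c d : α}
    (hab : a ≤ b) (had : a < d) (hcb : c < b) (hcd : c < d) :
    ∃ t, a ≤ t ∧ t ≤ b ∧ c < t ∧ t < d := by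
  obtain ⟨m, hcm, hmd⟩ := exists_between hcd
  refine ⟨max a (min b m), le_max_left _ _, max_le hab (min_le_left _ _), ?_, ?_⟩
  · exact lt_max_of_lt_right (lt_min hcb hcm)
  · exact max_lt had ((min_le_right _ _).trans_lt hmd)

theorem threshold_lt_two {N β₀ α₀ : ℝ} (hN : 2 < N) (hα : α₀ > -(1 - β₀) * (2 * N - 2)) :
    -2 * (α₀ - 2 * (N - 1) * β₀ + N) / (N - 2) < 2 := by
  rw [div_lt_iff₀ (by linarith)]
  linarith

theorem weight_pos_iff_threshold_lt {N β₀ α₀ ξ : ℝ} (hN : 2 < N) :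
    2 * (α₀ + ξ * (2 * N - 2)) + 2 * N - ((2 * N - 2) + 2) * (β₀ + ξ) > 0 ↔
      -2 * (α₀ - 2 * (N - 1) * β₀ + N) / (N - 2) < 2 * (β₀ + ξ) := by
  rw [div_lt_iff₀ (by linarith)]
  constructor <;> intro h <;> linarith

theorem stmt_6_general (N β₀ α₀ q₁ : ℝ) (hN : 3 ≤ N) (hβ1 : β₀ ≤ 1)
    (hα : α₀ > -(1 - β₀) * (2 * N - 2))
    (hq : q₁ > max (max 1 (2 * β₀)) (-2 * (α₀ - 2 * (N - 1) * β₀ + N) / (N - 2))) :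
    ∃ ξ : ℝ, 0 ≤ ξ ∧ 1 / 2 ≤ β₀ + ξ ∧ β₀ + ξ ≤ 1 ∧ q₁ > 2 * (β₀ + ξ) ∧
      2 * (α₀ + ξ * (2 * N - 2)) + 2 * N - ((2 * N - 2) + 2) * (β₀ + ξ) > 0 := by
  have hN2 : 2 < N := by linarith
  obtain ⟨hlow, hT⟩ := max_lt_iff.mp hq
  obtain ⟨t, hlow_t, ht2, hTt, htq⟩ :=
    exists_mem_Icc_mem_Ioo (max_le (by norm_num) (by linarith)) hlow
      (threshold_lt_two hN2 hα) hT
  obtain ⟨h1t, hβt⟩ := max_le_iff.mp hlow_t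
  have hsum : β₀ + (t / 2 - β₀) = t / 2 := by ring
  refine ⟨t / 2 - β₀, by linarith, by linarith, by linarith, by linarith, ?_⟩
  rw [weight_pos_iff_threshold_lt hN2, hsum]
  linarith

theorem stmt_6 (N β₀ α₀ q₁ : ℝ) (hN : 3 ≤ N) (hβ0 : 0 ≤ β₀) (hβ1 : β₀ ≤ 1)
    (hα : α₀ > -(1 - β₀) * (2 * N - 2))
    (hq : q₁ > max (max 1 (2 * β₀)) (-2 * (α₀ - 2 * (N - 1) * β₀ + N) / (N - 2))) :
    ∃ ξ : ℝ, 0 ≤ ξ ∧ 1 / 2 ≤ β₀ + ξ ∧ β₀ + ξ ≤ 1 ∧ q₁ > 2 * (β₀ + ξ) ∧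
      2 * (α₀ + ξ * (2 * N - 2)) + 2 * N - ((2 * N - 2) + 2) * (β₀ + ξ) > 0 :=
  stmt_6_general N β₀ α₀ q₁ hN hβ1 hα hq
end

section
/- Let N ≥ 3 and 2 < γ < N, β₀ ∈ [0,1], α₀ ∈ ℝ, q₁ ∈ ℝ. Suppose α₀ > max{−(1−β₀)N, −(N+(1−2β₀)γ)/2} and max{1, 2β₀} < q₁ < min{ 2(α₀ − β₀γ + N)/(N−γ), 2(2α₀ + (1−2β₀)γ + 2N − 2)/(2N−2−γ) }. Then there exists ξ ≥ 0 with 1/2 ≤ β₀ + ξ ≤ 1 and 2(β₀+ξ) < q₁ < (4(α₀ + ξγ) + 4N − 2(γ+2)(β₀+ξ))/(2N−2−γ). -/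
/-!
Put `b = β₀ + ξ`. The last inequality becomes `0 < f b` for the affine function
`f b = 4 (α₀ - β₀ γ + N) + (2 γ - 4) b - q₁ (2 N - 2 - γ)`, and the two upper bounds on `q₁` say
precisely `0 < f 1` and `0 < f (q₁ / 2)`. So `b` can be taken to be `1` when `q₁ / 2 > 1`, and
otherwise a point slightly to the left of `q₁ / 2`, which exceeds `max β₀ (1 / 2)` by the lower
bound on `q₁`.
-/

open Filter Topology

theorem exists_mem_Icc_lt_and_pos {f : ℝ → ℝ} {lo hi u : ℝ} (hlo : lo < hi) (hlou : lo ≤ u)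
    (hf : ContinuousAt f hi) (hfu : 0 < f u) (hfhi : 0 < f hi) :
    ∃ b, lo ≤ b ∧ b ≤ u ∧ b < hi ∧ 0 < f b := by
  rcases le_or_gt hi u with hhiu | huhi
  · have hpos : ∀ᶠ b in 𝓝[<] hi, 0 < f b :=
      nhdsWithin_le_nhds (hf.eventually (lt_mem_nhds hfhi))
    obtain ⟨b, hfb, hb⟩ := (hpos.and (Ioo_mem_nhdsLT hlo)).exists
    exact ⟨b, hb.1.le, hb.2.le.trans hhiu, hb.2, hfb⟩
  · exact ⟨u, hlou, le_rfl, huhi, hfu⟩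

theorem stmt_7_general (N γ β₀ α₀ q₁ : ℝ) (hN : 3 ≤ N) (hγN : γ < N)
    (hβ1 : β₀ ≤ 1)
    (hq1 : max 1 (2 * β₀) < q₁)
    (hq2 : q₁ < min (2 * (α₀ - β₀ * γ + N) / (N - γ))
        (2 * (2 * α₀ + (1 - 2 * β₀) * γ + 2 * N - 2) / (2 * N - 2 - γ))) :
    ∃ ξ : ℝ, 0 ≤ ξ ∧ 1 / 2 ≤ β₀ + ξ ∧ β₀ + ξ ≤ 1 ∧ 2 * (β₀ + ξ) < q₁ ∧
      q₁ < (4 * (α₀ + ξ * γ) + 4 * N - 2 * (γ + 2) * (β₀ + ξ)) / (2 * N - 2 - γ) := by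
  have hNγ : 0 < N - γ := by linarith
  have hD : 0 < 2 * N - 2 - γ := by linarith
  obtain ⟨hq_one, hq_β⟩ := max_lt_iff.mp hq1
  obtain ⟨hq_Nγ, hq_D⟩ := lt_min_iff.mp hq2
  rw [lt_div_iff₀ hNγ] at hq_Nγ
  rw [lt_div_iff₀ hD] at hq_D
  set f : ℝ → ℝ := fun b ↦ 4 * (α₀ - β₀ * γ + N) + (2 * γ - 4) * b - q₁ * (2 * N - 2 - γ)
  obtain ⟨b, hlo, hb1, hbq, hfb⟩ := exists_mem_Icc_lt_and_pos (f := f) (u := 1)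
    (show max β₀ (1 / 2) < q₁ / 2 from max_lt (by linarith) (by linarith))
    (max_le hβ1 (by norm_num)) (by fun_prop) (by simp only [f]; linarith) (by simp only [f]; linarith)
  obtain ⟨hβb, hhalf⟩ := max_le_iff.mp hlo
  refine ⟨b - β₀, by linarith, by linarith, by linarith, by linarith, ?_⟩
  rw [lt_div_iff₀ hD]
  simp only [f] at hfb
  linarith

theorem stmt_7 (N γ β₀ α₀ q₁ : ℝ) (hN : 3 ≤ N) (hγ2 : 2 < γ) (hγN : γ < N)
    (hβ0 : 0 ≤ β₀) (hβ1 : β₀ ≤ 1)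
    (hα : α₀ > max (-(1 - β₀) * N) (-(N + (1 - 2 * β₀) * γ) / 2))
    (hq1 : max 1 (2 * β₀) < q₁)
    (hq2 : q₁ < min (2 * (α₀ - β₀ * γ + N) / (N - γ))
        (2 * (2 * α₀ + (1 - 2 * β₀) * γ + 2 * N - 2) / (2 * N - 2 - γ))) :
    ∃ ξ : ℝ, 0 ≤ ξ ∧ 1 / 2 ≤ β₀ + ξ ∧ β₀ + ξ ≤ 1 ∧ 2 * (β₀ + ξ) < q₁ ∧
      q₁ < (4 * (α₀ + ξ * γ) + 4 * N - 2 * (γ + 2) * (β₀ + ξ)) / (2 * N - 2 - γ) :=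
  stmt_7_general N γ β₀ α₀ q₁ hN hγN hβ1 hq1 hq2
end

section
/- Let N ≥ 3, γ = N, β₀ ∈ [0,1], α₀ ∈ ℝ, q₁ ∈ ℝ. Suppose α₀ > −(1−β₀)N and max{1, 2β₀} < q₁ < 2(2α₀ + 3N − 2β₀N − 2)/(N−2). Then there exists ξ ≥ 0 with 1/2 ≤ β₀ + ξ ≤ 1 and 2(β₀+ξ) < q₁ < (4(α₀ + ξN) + 4N − 2(N+2)(β₀+ξ))/(N−2). -/
/-! Writing `β = β₀ + ξ` and `K = 4 (α₀ + (1 - β₀) N) / (N - 2) > 0`, the upper bound on `q₁` becomes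
`q₁ < 2β + K`, and the hypothesis on `q₁` is this bound at `β = 1`. So `β` must lie in
`[max β₀ (1/2), 1]` and in the open interval `((q₁ - K)/2, q₁/2)`; these two intervals meet because
each one's left end lies below the other one's right end. -/

theorem exists_mem_Icc_mem_Ioo_s8 {α : Type*} [LinearOrder α] [DenselyOrdered α] {m M L U : α}
    (hmM : m ≤ M) (hLU : L < U) (hLM : L < M) (hmU : m < U) :
    ∃ x ∈ Set.Icc m M, x ∈ Set.Ioo L U := by
  obtain ⟨c, hLc, hcU⟩ := exists_between hLU
  exact ⟨max m (min M c), ⟨le_max_left _ _, max_le hmM (min_le_left _ _)⟩,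
    lt_max_of_lt_right (lt_min hLM hLc), max_lt hmU ((min_le_right _ _).trans_lt hcU)⟩

theorem stmt_8_general (N β₀ α₀ q₁ : ℝ) (hN : 3 ≤ N) (hβ1 : β₀ ≤ 1)
    (hα : α₀ > -(1 - β₀) * N)
    (hq1 : max 1 (2 * β₀) < q₁)
    (hq2 : q₁ < 2 * (2 * α₀ + 3 * N - 2 * β₀ * N - 2) / (N - 2)) :
    ∃ ξ : ℝ, 0 ≤ ξ ∧ 1 / 2 ≤ β₀ + ξ ∧ β₀ + ξ ≤ 1 ∧ 2 * (β₀ + ξ) < q₁ ∧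
      q₁ < (4 * (α₀ + ξ * N) + 4 * N - 2 * (N + 2) * (β₀ + ξ)) / (N - 2) := by
  have hN2 : 0 < N - 2 := by linarith
  set K := 4 * (α₀ + (1 - β₀) * N) / (N - 2) with hK_def
  have hK : 0 < K := div_pos (by linarith) hN2
  have hq2K : q₁ < 2 + K := by
    rwa [show 2 * (2 * α₀ + 3 * N - 2 * β₀ * N - 2) / (N - 2) = 2 + K by
      rw [hK_def]; field_simp; ring] at hq2
  obtain ⟨hq1_one, hq1_β₀⟩ := max_lt_iff.mp hq1
  obtain ⟨β, ⟨hβ_ge, hβ_le⟩, hβ_lo, hβ_hi⟩ :=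
    exists_mem_Icc_mem_Ioo_s8 (m := max β₀ (1 / 2)) (M := 1) (L := (q₁ - K) / 2) (U := q₁ / 2)
      (max_le hβ1 (by norm_num)) (by linarith) (by linarith)
      (max_lt (by linarith) (by linarith))
  obtain ⟨hβ₀β, hhalfβ⟩ := max_le_iff.mp hβ_ge
  refine ⟨β - β₀, by linarith, by linarith, by linarith, by linarith, ?_⟩
  rw [show (4 * (α₀ + (β - β₀) * N) + 4 * N - 2 * (N + 2) * (β₀ + (β - β₀))) / (N - 2)
      = 2 * β + K by rw [hK_def]; field_simp; ring]
  linarith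

theorem stmt_8 (N β₀ α₀ q₁ : ℝ) (hN : 3 ≤ N) (hβ0 : 0 ≤ β₀) (hβ1 : β₀ ≤ 1)
    (hα : α₀ > -(1 - β₀) * N)
    (hq1 : max 1 (2 * β₀) < q₁)
    (hq2 : q₁ < 2 * (2 * α₀ + 3 * N - 2 * β₀ * N - 2) / (N - 2)) :
    ∃ ξ : ℝ, 0 ≤ ξ ∧ 1 / 2 ≤ β₀ + ξ ∧ β₀ + ξ ≤ 1 ∧ 2 * (β₀ + ξ) < q₁ ∧
      q₁ < (4 * (α₀ + ξ * N) + 4 * N - 2 * (N + 2) * (β₀ + ξ)) / (N - 2) :=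
  stmt_8_general N β₀ α₀ q₁ hN hβ1 hα hq1 hq2
end

section
/- Let N ≥ 3, γ > 2N−2, β₀ ∈ [0,1], α₀ ∈ ℝ, q₁ ∈ ℝ. Suppose q₁ > max{1, 2β₀, 2(α₀ − β₀γ + N)/(N−γ), 2(2α₀ + (1−2β₀)γ + 2N−2)/(2N−2−γ)}. Then there exists ξ ≥ 0 with 1/2 ≤ β₀+ξ ≤ 1 and q₁ > 2·max{ β₀+ξ, (2(α₀+ξγ) + 2N − (γ+2)(β₀+ξ))/(2N−2−γ) }. -/
/-!
Put `b = β₀ + ξ`. The second quantity in the maximum is an affine function `E b` of `b`, and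
`s = (α₀ - β₀γ + N)/(N - γ)` is its fixed point: `(2N - 2 - γ)(E b - b) = 2((α₀ - β₀γ + N) - (N - γ) b)`,
so `E b ≤ b` as soon as `s ≤ b`. Clamping `s` into `[max β₀ ½, 1]` gives a `b` which is either `1`,
where `2 E 1 < q₁` is the last hypothesis, or at least `s`, where `E b ≤ b`; and `2b < q₁` because
`b ≤ max β₀ ½ s`.
-/

lemma exists_clamp_le_max {α : Type*} [LinearOrder α] {L s u : α} (hL : L ≤ u) :
    ∃ b, L ≤ b ∧ b ≤ u ∧ b ≤ max L s ∧ (b = u ∨ s ≤ b) := by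
  refine ⟨max L (min u s), le_max_left _ _, max_le hL (min_le_left _ _),
    max_le_max le_rfl (min_le_right _ _), ?_⟩
  rcases le_total u s with hus | hsu
  · exact .inl (by simp [min_eq_left hus, hL])
  · exact .inr (by simp [min_eq_right hsu])

lemma exponent_le_of_fixedPoint_le {N γ α₀ β₀ b : ℝ} (hNγ : N - γ < 0) (hD : 2 * N - 2 - γ < 0)
    (hsb : (α₀ - β₀ * γ + N) / (N - γ) ≤ b) :
    (2 * (α₀ + (b - β₀) * γ) + 2 * N - (γ + 2) * b) / (2 * N - 2 - γ) ≤ b := by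
  rw [div_le_iff_of_neg hNγ] at hsb
  rw [div_le_iff_of_neg hD]
  linarith

theorem stmt_10_general (N γ β₀ α₀ q₁ : ℝ) (hN : 3 ≤ N) (hγ : 2 * N - 2 < γ)
    (hβ1 : β₀ ≤ 1)
    (hq : q₁ > max (max (max 1 (2 * β₀)) (2 * (α₀ - β₀ * γ + N) / (N - γ)))
        (2 * (2 * α₀ + (1 - 2 * β₀) * γ + 2 * N - 2) / (2 * N - 2 - γ))) :
    ∃ ξ : ℝ, 0 ≤ ξ ∧ 1 / 2 ≤ β₀ + ξ ∧ β₀ + ξ ≤ 1 ∧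
      q₁ > 2 * max (β₀ + ξ)
          ((2 * (α₀ + ξ * γ) + 2 * N - (γ + 2) * (β₀ + ξ)) / (2 * N - 2 - γ)) := by
  have hNγ : N - γ < 0 := by linarith
  have hD : 2 * N - 2 - γ < 0 := by linarith
  simp only [gt_iff_lt, max_lt_iff, mul_div_assoc] at hq ⊢
  obtain ⟨⟨⟨h1q, hβq⟩, hsq⟩, hEq⟩ := hq
  obtain ⟨b, hLb, hb1, hbmax, hb⟩ :=
    exists_clamp_le_max (s := (α₀ - β₀ * γ + N) / (N - γ))
      (max_le hβ1 (by norm_num : (1 / 2 : ℝ) ≤ 1))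
  rw [max_le_iff] at hLb
  refine ⟨b - β₀, by linarith, by linarith, by linarith, ?_⟩
  rw [add_sub_cancel, mul_max_of_nonneg _ _ zero_le_two, max_lt_iff]
  have h2b : 2 * b < q₁ := by
    have hmax : 2 * max (max β₀ (1 / 2)) ((α₀ - β₀ * γ + N) / (N - γ)) < q₁ := by
      simp only [mul_max_of_nonneg _ _ (zero_le_two : (0 : ℝ) ≤ 2), max_lt_iff]
      exact ⟨⟨hβq, by linarith⟩, hsq⟩
    linarith
  refine ⟨h2b, ?_⟩
  rcases hb with rfl | hsb
  · convert hEq using 3; ring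
  · linarith [exponent_le_of_fixedPoint_le hNγ hD hsb]

theorem stmt_10 (N γ β₀ α₀ q₁ : ℝ) (hN : 3 ≤ N) (hγ : 2 * N - 2 < γ)
    (hβ0 : 0 ≤ β₀) (hβ1 : β₀ ≤ 1)
    (hq : q₁ > max (max (max 1 (2 * β₀)) (2 * (α₀ - β₀ * γ + N) / (N - γ)))
        (2 * (2 * α₀ + (1 - 2 * β₀) * γ + 2 * N - 2) / (2 * N - 2 - γ))) :
    ∃ ξ : ℝ, 0 ≤ ξ ∧ 1 / 2 ≤ β₀ + ξ ∧ β₀ + ξ ≤ 1 ∧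
      q₁ > 2 * max (β₀ + ξ)
          ((2 * (α₀ + ξ * γ) + 2 * N - (γ + 2) * (β₀ + ξ)) / (2 * N - 2 - γ)) :=
  stmt_10_general N γ β₀ α₀ q₁ hN hγ hβ1 hq
end

section
/- Let Ω ⊆ ℝ^N (N ≥ 3) be measurable, K, V ≥ 0 measurable with Λ := ess sup_{x∈Ω} K(|x|)/(|x|^α V(|x|)) < ∞ for some α ∈ ℝ (i.e. β = 1). Let u be measurable with |u(x)| ≤ m|x|^{−ν} a.e. on Ω, and suppose ∫_Ω V(|x|)|u|² dx ≤ ‖u‖² and ∫_Ω V(|x|)|h|² dx ≤ ‖h‖². Then for every q > 2, ∫_Ω K(|x|)|u|^{q−1}|h| dx ≤ Λ m^{q−2} (∫_Ω |x|^{2α−2ν(q−2)} V(|x|)|u|² dx)^{1/2} ‖h‖. -/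
/-!
Set `s = α - ν (q - 2)`. Off the null set `{0}`, the bounds `K ≤ Λ |x|^α V` and
`|u|^{q-2} ≤ m^{q-2} |x|^{-ν(q-2)}` give the pointwise estimate
`K |u|^{q-1} |h| ≤ Λ m^{q-2} (|x|^s √V |u|) (√V |h|)`,
and the Cauchy–Schwarz inequality for the two bracketed factors yields the claim, the second
one contributing at most `‖h‖`.
-/

open MeasureTheory
open scoped ENNReal

theorem Real.rpow_le_rpow_sub_one_mul {t M p : ℝ} (ht : 0 ≤ t) (htM : t ≤ M) (hp : 1 ≤ p) :
    t ^ p ≤ M ^ (p - 1) * t := by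
  have hsplit := Real.rpow_add_one' ht (y := p - 1) (by rw [sub_add_cancel]; linarith)
  rw [sub_add_cancel] at hsplit
  rw [hsplit]
  gcongr

theorem mul_abs_rpow_mul_abs_le {Λ m α ν q r K V a b : ℝ} (hr : 0 < r) (hΛ : 0 ≤ Λ)
    (hm : 0 ≤ m) (hV : 0 ≤ V) (hq : 2 ≤ q) (hK : K ≤ Λ * (r ^ α * V))
    (ha : |a| ≤ m * r ^ (-ν)) :
    K * |a| ^ (q - 1) * |b| ≤
      Λ * m ^ (q - 2) * ((r ^ (α - ν * (q - 2)) * √V * |a|) * (√V * |b|)) := by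
  have hpow : |a| ^ (q - 1) ≤ m ^ (q - 2) * r ^ (-ν * (q - 2)) * |a| := by
    have := Real.rpow_le_rpow_sub_one_mul (abs_nonneg a) ha (p := q - 1) (by linarith)
    rwa [show q - 1 - 1 = q - 2 by ring, Real.mul_rpow hm (by positivity),
      ← Real.rpow_mul hr.le] at this
  calc K * |a| ^ (q - 1) * |b|
      ≤ Λ * (r ^ α * V) * |a| ^ (q - 1) * |b| := by gcongr
    _ ≤ Λ * (r ^ α * V) * (m ^ (q - 2) * r ^ (-ν * (q - 2)) * |a|) * |b| := by gcongr
    _ = Λ * m ^ (q - 2) * ((r ^ α * r ^ (-ν * (q - 2))) * (√V * √V) * |a| * |b|) := by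
      rw [Real.mul_self_sqrt hV]; ring
    _ = Λ * m ^ (q - 2) * ((r ^ (α - ν * (q - 2)) * √V * |a|) * (√V * |b|)) := by
      rw [← Real.rpow_add hr, neg_mul, ← sub_eq_add_neg]; ring

theorem lintegral_ofReal_le_of_le_mul_mul {X : Type*} [MeasurableSpace X] {μ : Measure X}
    {f F G : X → ℝ} {c : ℝ} (hF : AEMeasurable F μ) (hG : AEMeasurable G μ)
    (hF0 : ∀ x, 0 ≤ F x) (hG0 : ∀ x, 0 ≤ G x) (hf : ∀ᵐ x ∂μ, f x ≤ c * (F x * G x)) :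
    ∫⁻ x, ENNReal.ofReal (f x) ∂μ ≤
      ENNReal.ofReal c * (∫⁻ x, ENNReal.ofReal (F x ^ 2) ∂μ) ^ (1 / 2 : ℝ) *
        (∫⁻ x, ENNReal.ofReal (G x ^ 2) ∂μ) ^ (1 / 2 : ℝ) := by
  have hsq : ∀ {H : X → ℝ}, (∀ x, 0 ≤ H x) →
      ∀ x, ENNReal.ofReal (H x) ^ (2 : ℝ) = ENNReal.ofReal (H x ^ 2) := fun hH0 x => by
    rw [ENNReal.rpow_two, ENNReal.ofReal_pow (hH0 x)]
  calc ∫⁻ x, ENNReal.ofReal (f x) ∂μ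
      ≤ ∫⁻ x, ENNReal.ofReal c * (ENNReal.ofReal (F x) * ENNReal.ofReal (G x)) ∂μ := by
        refine lintegral_mono_ae ?_
        filter_upwards [hf] with x hx
        rw [← ENNReal.ofReal_mul (hF0 x), ← ENNReal.ofReal_mul' (mul_nonneg (hF0 x) (hG0 x))]
        exact ENNReal.ofReal_le_ofReal hx
    _ = ENNReal.ofReal c * ∫⁻ x, (fun x => ENNReal.ofReal (F x)) x *
          (fun x => ENNReal.ofReal (G x)) x ∂μ :=
        lintegral_const_mul' _ _ ENNReal.ofReal_ne_top
    _ ≤ ENNReal.ofReal c * ((∫⁻ x, ENNReal.ofReal (F x) ^ (2 : ℝ) ∂μ) ^ (1 / 2 : ℝ) *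
          (∫⁻ x, ENNReal.ofReal (G x) ^ (2 : ℝ) ∂μ) ^ (1 / 2 : ℝ)) := by
        gcongr
        exact ENNReal.lintegral_mul_le_Lp_mul_Lq μ Real.HolderConjugate.two_two
          hF.ennreal_ofReal hG.ennreal_ofReal
    _ = _ := by simp only [hsq hF0, hsq hG0, mul_assoc]

theorem stmt_16_general (N : ℕ) (hN : 3 ≤ N) (Ω : Set (EuclideanSpace ℝ (Fin N)))
    (K V : ℝ → ℝ)
    (hVmeas : Measurable V)
    (hV : ∀ r, 0 ≤ V r)
    (Λ α : ℝ) (hΛ : 0 ≤ Λ)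
    (hKV : ∀ᵐ x ∂(volume.restrict Ω), K ‖x‖ ≤ Λ * (‖x‖ ^ α * V ‖x‖))
    (u h : EuclideanSpace ℝ (Fin N) → ℝ)
    (humeas : Measurable u) (hhmeas : Measurable h)
    (m ν : ℝ) (hm : 0 < m)
    (hu : ∀ᵐ x ∂(volume.restrict Ω), |u x| ≤ m * ‖x‖ ^ (-ν))
    (normh : ℝ) (hnormh : 0 ≤ normh)
    (hVh : ∫⁻ x in Ω, ENNReal.ofReal (V ‖x‖ * (h x) ^ 2) ≤ ENNReal.ofReal (normh ^ 2))
    (q : ℝ) (hq : 2 < q) :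
    ∫⁻ x in Ω, ENNReal.ofReal (K ‖x‖ * |u x| ^ (q - 1) * |h x|) ≤
      ENNReal.ofReal (Λ * m ^ (q - 2)) *
        (∫⁻ x in Ω,
            ENNReal.ofReal (‖x‖ ^ (2 * α - 2 * ν * (q - 2)) * V ‖x‖ * (u x) ^ 2)) ^
          ((1 : ℝ) / 2) *
        ENNReal.ofReal normh := by
  have : Nonempty (Fin N) := ⟨⟨0, by omega⟩⟩
  have hx0 : ∀ᵐ x ∂(volume.restrict Ω), x ≠ 0 :=
    ae_restrict_of_ae (compl_mem_ae_iff.mpr (measure_singleton 0))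
  have hF : ∀ x : EuclideanSpace ℝ (Fin N),
      (‖x‖ ^ (α - ν * (q - 2)) * √(V ‖x‖) * |u x|) ^ 2 =
        ‖x‖ ^ (2 * α - 2 * ν * (q - 2)) * V ‖x‖ * (u x) ^ 2 := fun x => by
    rw [mul_pow, mul_pow, Real.sq_sqrt (hV _), sq_abs, ← Real.rpow_natCast,
      ← Real.rpow_mul (norm_nonneg x)]
    ring_nf
  have hG : (∫⁻ x in Ω, ENNReal.ofReal ((√(V ‖x‖) * |h x|) ^ 2)) ^ (1 / 2 : ℝ) ≤
      ENNReal.ofReal normh := by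
    simp only [mul_pow, Real.sq_sqrt (hV _), sq_abs]
    calc _ ≤ ENNReal.ofReal (normh ^ 2) ^ (1 / 2 : ℝ) := by gcongr
      _ = ENNReal.ofReal normh := by
        rw [ENNReal.ofReal_pow hnormh, ← ENNReal.rpow_natCast, ← ENNReal.rpow_mul]
        norm_num
  calc _ ≤ _ := lintegral_ofReal_le_of_le_mul_mul
        (F := fun x => ‖x‖ ^ (α - ν * (q - 2)) * √(V ‖x‖) * |u x|)
        (G := fun x => √(V ‖x‖) * |h x|) (by fun_prop) (by fun_prop)
        (fun x => by positivity) (fun x => by positivity)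
        (by
          filter_upwards [hKV, hu, hx0] with x hKx hux hx
          exact mul_abs_rpow_mul_abs_le (norm_pos_iff.mpr hx) hΛ hm.le (hV _) hq.le hKx hux)
    _ ≤ _ := by simp only [hF]; gcongr

/-- The `β = 1` case of Lemma 5.1, with all integrals taken in `[0,∞]`. -/
theorem stmt_16 (N : ℕ) (hN : 3 ≤ N) (Ω : Set (EuclideanSpace ℝ (Fin N)))
    (hΩ : MeasurableSet Ω) (K V : ℝ → ℝ)
    (hKmeas : Measurable K) (hVmeas : Measurable V)
    (hK : ∀ r, 0 ≤ K r) (hV : ∀ r, 0 ≤ V r)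
    (Λ α : ℝ) (hΛ : 0 ≤ Λ)
    (hKV : ∀ᵐ x ∂(volume.restrict Ω), K ‖x‖ ≤ Λ * (‖x‖ ^ α * V ‖x‖))
    (u h : EuclideanSpace ℝ (Fin N) → ℝ)
    (humeas : Measurable u) (hhmeas : Measurable h)
    (m ν : ℝ) (hm : 0 < m)
    (hu : ∀ᵐ x ∂(volume.restrict Ω), |u x| ≤ m * ‖x‖ ^ (-ν))
    (normu normh : ℝ) (hnormu : 0 ≤ normu) (hnormh : 0 ≤ normh)
    (hVu : ∫⁻ x in Ω, ENNReal.ofReal (V ‖x‖ * (u x) ^ 2) ≤ ENNReal.ofReal (normu ^ 2))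
    (hVh : ∫⁻ x in Ω, ENNReal.ofReal (V ‖x‖ * (h x) ^ 2) ≤ ENNReal.ofReal (normh ^ 2))
    (q : ℝ) (hq : 2 < q) :
    ∫⁻ x in Ω, ENNReal.ofReal (K ‖x‖ * |u x| ^ (q - 1) * |h x|) ≤
      ENNReal.ofReal (Λ * m ^ (q - 2)) *
        (∫⁻ x in Ω,
            ENNReal.ofReal (‖x‖ ^ (2 * α - 2 * ν * (q - 2)) * V ‖x‖ * (u x) ^ 2)) ^
          ((1 : ℝ) / 2) *
        ENNReal.ofReal normh :=
  stmt_16_general N hN Ω K V hVmeas hV Λ α hΛ hKV u h humeas hhmeas m ν hm hu normh hnormh hVh q hq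
end
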